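/- For all optimisers a and b and every result vector R ∈ {0,1}^n, the probability that a produces R under the uniform NIAH distribution equals the probability that b produces R: (u_NIAH)_a(R) = (u_NIAH)_b(R). In other words, NFL holds for the uniform needle-in-a-haystack problem. -/

import Mathlib

namespace NFL

/-- A (deterministic) optimiser on search space `Fin n` and range `Y`:
it assigns to every trace (list of pairs with pairwise distinct first
components) of length `< n` a next, unvisited search point. -/
structure Optimiser (n : ℕ) (Y : Type*) where
  next : List (Fin n × Y) → Fin n
  valid : ∀ T : List (Fin n × Y), T.length < n → (T.map Prod.fst).Nodup →
    next T ∉ T.map Prod.fst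

variable {n : ℕ} {Y : Type*}

/-- The trace generated after `k` steps by running optimiser `a`
on target function `f`, starting from the empty trace. -/
def runFrom (a : Optimiser n Y) (f : Fin n → Y) : ℕ → List (Fin n × Y)
  | 0 => []
  | k + 1 =>
      runFrom a f k ++ [(a.next (runFrom a f k), f (a.next (runFrom a f k)))]

/-- The result vector `T^y(a,f)`: its `i`-th entry (0-indexed) is the value
observed at step `i+1`, i.e. `f` applied to the point probed after `i` steps. -/
def resVec (a : Optimiser n Y) (f : Fin n → Y) (i : Fin n) : Y :=
  f (a.next (runFrom a f (i : ℕ)))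

/-- A problem distribution: a probability distribution on `Y^X`. -/
def IsProbDist [Fintype Y] (P : (Fin n → Y) → ℝ) : Prop :=
  (∀ f, 0 ≤ P f) ∧ ∑ f, P f = 1

/-- `P_a(R)`: the probability that optimiser `a` produces result vector `R`. -/
def resProb [Fintype Y] [DecidableEq Y] (P : (Fin n → Y) → ℝ)
    (a : Optimiser n Y) (R : Fin n → Y) : ℝ :=
  ∑ f ∈ Finset.univ.filter (fun f => resVec a f = R), P f

/-- Expected performance `M^P(a)` of optimiser `a` under distribution `P`
and performance measure `M`. -/
def perf [Fintype Y] (P : (Fin n → Y) → ℝ) (M : (Fin n → Y) → ℝ)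
    (a : Optimiser n Y) : ℝ :=
  ∑ f, P f * M (resVec a f)

/-- NFL holds for `P`: all optimisers have the same expected performance
under every (nonnegative) performance measure. -/
def NFLholds [Fintype Y] (P : (Fin n → Y) → ℝ) : Prop :=
  ∀ M : (Fin n → Y) → ℝ, (∀ R, 0 ≤ M R) →
    ∀ a b : Optimiser n Y, perf P M a = perf P M b

/-- The histogram of `f`: `h_f(y) = |f⁻¹(y)|`. -/
def histogram [DecidableEq Y] (f : Fin n → Y) (y : Y) : ℕ :=
  (Finset.univ.filter fun x => f x = y).card

/-- `P` is block uniform: functions with equal histograms get equal probability. -/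
def BlockUniform [DecidableEq Y] (P : (Fin n → Y) → ℝ) : Prop :=
  ∀ f g : Fin n → Y, histogram f = histogram g → P f = P g

/-- `F` is closed under permutation: `f ∈ F` implies `σf ∈ F`,
where `(σf)(x) = f(σ⁻¹(x))`. -/
def Cup [Fintype Y] [DecidableEq Y] (F : Finset (Fin n → Y)) : Prop :=
  ∀ f ∈ F, ∀ σ : Equiv.Perm (Fin n), (f ∘ σ.symm) ∈ F

/-- The uniform distribution on a class `F`. -/
noncomputable def uniformOn [Fintype Y] [DecidableEq Y] (F : Finset (Fin n → Y))
    (f : Fin n → Y) : ℝ :=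
  if f ∈ F then 1 / F.card else 0

/-- An optimiser is non-adaptive if it probes the points of `X` in a fixed
order, regardless of the observed values. -/
def NonAdaptive (a : Optimiser n Y) : Prop :=
  ∃ ord : Fin n → Fin n,
    ∀ (f : Fin n → Y) (i : Fin n), a.next (runFrom a f (i : ℕ)) = ord i

/-- Optimisation time `M_ptm(R)`: the least index `i` (counting from 1) with
`R[i] = yMax`, with the convention `M_ptm(R) = n` if no such index exists. -/
def mptm [DecidableEq Y] (yMax : Y) (R : Fin n → Y) : ℕ :=
  if h : ∃ i, R i = yMax then
    ((Finset.univ.filter fun i => R i = yMax).min'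
      ⟨h.choose, Finset.mem_filter.mpr ⟨Finset.mem_univ _, h.choose_spec⟩⟩).val + 1
  else n


/-!
For every optimiser `a`, the map `f ↦ resVec a f` is a bijection of `Y^X`. It is injective
because the values observed so far determine the next probe: two functions with the same result
vector are probed along the same sequence, and that sequence visits every point. Moreover
`resVec a f = f ∘ π` for the permutation `π` of probed points, so it preserves histograms.
Hence for a block-uniform `P`, such as the uniform distribution on needle-in-a-haystack
functions (whose weight depends only on the number of ones), `P_a(R) = P(R)` for every `a`.
-/

open Function

section Trace

variable (a : Optimiser n Y) (f : Fin n → Y)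

def probe (k : ℕ) : Fin n :=
  a.next (runFrom a f k)

lemma runFrom_succ (k : ℕ) :
    runFrom a f (k + 1) = runFrom a f k ++ [(probe a f k, f (probe a f k))] := rfl

lemma resVec_apply (i : Fin n) : resVec a f i = f (probe a f i) := rfl

lemma map_fst_runFrom (k : ℕ) :
    (runFrom a f k).map Prod.fst = (List.range k).map (probe a f) := by
  induction k with
  | zero => rfl
  | succ k ih => simp [runFrom_succ, List.range_succ, ih]

lemma length_runFrom (k : ℕ) : (runFrom a f k).length = k := by
  simpa using congrArg List.length (map_fst_runFrom a f k)

lemma nodup_map_fst_runFrom {k : ℕ} (hk : k ≤ n) : ((runFrom a f k).map Prod.fst).Nodup := by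
  induction k with
  | zero => exact List.nodup_nil
  | succ k ih =>
    have hnodup := ih (by omega)
    have hfresh := a.valid _ ((length_runFrom a f k).trans_lt hk) hnodup
    rw [runFrom_succ, List.map_append, List.map_singleton, List.nodup_append]
    exact ⟨hnodup, List.nodup_singleton _, fun x hx y hy => by
      rw [List.mem_singleton.1 hy]; exact ne_of_mem_of_not_mem hx hfresh⟩

lemma probe_bijective : Bijective fun i : Fin n => probe a f i := by
  refine Finite.injective_iff_bijective.1 fun i j hij => Fin.ext ?_
  have hnodup := nodup_map_fst_runFrom a f le_rfl
  rw [map_fst_runFrom, List.nodup_map_iff_inj_on List.nodup_range] at hnodup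
  exact hnodup i (List.mem_range.2 i.isLt) j (List.mem_range.2 j.isLt) hij

end Trace

section ResultVector

variable (a : Optimiser n Y)

lemma runFrom_eq_of_resVec_eq {f g : Fin n → Y} (h : resVec a f = resVec a g) {k : ℕ}
    (hk : k ≤ n) : runFrom a f k = runFrom a g k := by
  induction k with
  | zero => rfl
  | succ k ih =>
    have hrun := ih (by omega)
    have hprobe : probe a f k = probe a g k := by rw [probe, probe, hrun]
    have hval : f (probe a f k) = g (probe a g k) := congrFun h ⟨k, hk⟩
    rw [runFrom_succ, runFrom_succ, hrun, hval, hprobe]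

lemma resVec_injective : Injective (resVec a) := by
  intro f g h
  funext x
  obtain ⟨i, rfl⟩ := (probe_bijective a f).2 x
  have hprobe : probe a f i = probe a g i := by
    rw [probe, probe, runFrom_eq_of_resVec_eq a h i.isLt.le]
  simpa only [resVec_apply, hprobe] using congrFun h i

lemma resVec_bijective [Finite Y] : Bijective (resVec a) :=
  Finite.injective_iff_bijective.1 (resVec_injective a)

end ResultVector

lemma histogram_comp_of_bijective [DecidableEq Y] (f : Fin n → Y)
    {σ : Fin n → Fin n} (hσ : Bijective σ) : histogram (f ∘ σ) = histogram f := by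
  funext y
  simp only [histogram, Finset.card_filter, comp_apply]
  exact hσ.sum_comp fun x => if f x = y then 1 else 0

lemma histogram_resVec [DecidableEq Y] (a : Optimiser n Y)
    (f : Fin n → Y) : histogram (resVec a f) = histogram f :=
  histogram_comp_of_bijective f (probe_bijective a f)

lemma perf_eq_sum_resProb [Fintype Y] [DecidableEq Y]
    (P M : (Fin n → Y) → ℝ) (a : Optimiser n Y) :
    perf P M a = ∑ R, resProb P a R * M R := by
  rw [perf, ← Finset.sum_fiberwise Finset.univ (resVec a)]
  refine Finset.sum_congr rfl fun R _ => ?_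
  rw [resProb, Finset.sum_mul]
  exact Finset.sum_congr rfl fun f hf => by rw [(Finset.mem_filter.1 hf).2]

namespace BlockUniform

variable [Fintype Y] [DecidableEq Y] {P : (Fin n → Y) → ℝ}

lemma resProb_eq (hP : BlockUniform P) (a : Optimiser n Y) (R : Fin n → Y) :
    resProb P a R = P R := by
  let e := Equiv.ofBijective _ (resVec_bijective a)
  have hfiber : Finset.univ.filter (fun f => resVec a f = R) = {e.symm R} := by
    ext f
    simp [e, Equiv.eq_symm_apply]
  rw [resProb, hfiber, Finset.sum_singleton]
  refine hP _ _ ?_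
  rw [← histogram_resVec a, ← Equiv.ofBijective_apply _ (resVec_bijective a),
    Equiv.apply_symm_apply]

lemma nflHolds (hP : BlockUniform P) : NFLholds P := by
  intro M _ a b
  simp only [perf_eq_sum_resProb, hP.resProb_eq]

end BlockUniform

lemma blockUniform_comp_histogram [DecidableEq Y] (φ : (Y → ℕ) → ℝ) :
    BlockUniform fun f : Fin n → Y => φ (histogram f) :=
  fun _ _ h => congrArg φ h

theorem niah_nfl_general {n : ℕ} :
    (∀ (a b : Optimiser n Bool) (R : Fin n → Bool),
        resProb (fun f => if (Finset.univ.filter fun x => f x = true).card = 1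
            then 1 / (n : ℝ) else 0) a R
          = resProb (fun f => if (Finset.univ.filter fun x => f x = true).card = 1
            then 1 / (n : ℝ) else 0) b R) ∧
      NFLholds (fun f : Fin n → Bool =>
        if (Finset.univ.filter fun x => f x = true).card = 1
          then 1 / (n : ℝ) else 0) := by
  have hP := blockUniform_comp_histogram (n := n) fun h => if h true = 1 then 1 / (n : ℝ) else 0
  exact ⟨fun a b R => (hP.resProb_eq a R).trans (hP.resProb_eq b R).symm, hP.nflHolds⟩

theorem niah_nfl {n : ℕ} (hn : 1 ≤ n) :
    (∀ (a b : Optimiser n Bool) (R : Fin n → Bool),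
        resProb (fun f => if (Finset.univ.filter fun x => f x = true).card = 1
            then 1 / (n : ℝ) else 0) a R
          = resProb (fun f => if (Finset.univ.filter fun x => f x = true).card = 1
            then 1 / (n : ℝ) else 0) b R) ∧
      NFLholds (fun f : Fin n → Bool =>
        if (Finset.univ.filter fun x => f x = true).card = 1
          then 1 / (n : ℝ) else 0) :=
  niah_nfl_general

end NFL
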